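/- The optimal profile f₀(t) = 1 − √2·exp(−t/√2)·cos(t/√2 − π/4) has transition energy exactly √2, i.e. ∫₀^∞ ((f₀(t)−1)² + (f₀''(t))²) dt = √2. -/

import Mathlib

/-!
Writing `e = exp (-t/√2)` and `θ = t/√2 - π/4`, one has `f₀ - 1 = -√2 e cos θ` and
`f₀'' = -√2 e sin θ`, so the energy density is `2 e² = 2 exp (-√2 t)`, whose integral over
`(0, ∞)` is `2/√2 = √2`.
-/

open MeasureTheory

noncomputable def optProfile : ℝ → ℝ := fun t =>
  1 - Real.sqrt 2 * Real.exp (-t / Real.sqrt 2) * Real.cos (t / Real.sqrt 2 - Real.pi / 4)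

open Real

section DampedOscillation

variable (a φ : ℝ)

theorem hasDerivAt_exp_neg_div_mul_cos (t : ℝ) :
    HasDerivAt (fun t => exp (-t / a) * cos (t / a - φ))
      (-(exp (-t / a) * (cos (t / a - φ) + sin (t / a - φ))) / a) t := by
  have hexp : HasDerivAt (fun t => exp (-t / a)) (exp (-t / a) * (-1 / a)) t :=
    ((hasDerivAt_neg t).div_const a).exp
  have hcos : HasDerivAt (fun t => cos (t / a - φ)) (-sin (t / a - φ) * (1 / a)) t :=
    (((hasDerivAt_id t).div_const a).sub_const φ).cos
  refine (hexp.fun_mul hcos).congr_deriv ?_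
  ring

theorem hasDerivAt_exp_neg_div_mul_cos_add_sin (t : ℝ) :
    HasDerivAt (fun t => exp (-t / a) * (cos (t / a - φ) + sin (t / a - φ)))
      (-(2 * exp (-t / a) * sin (t / a - φ)) / a) t := by
  have hexp : HasDerivAt (fun t => exp (-t / a)) (exp (-t / a) * (-1 / a)) t :=
    ((hasDerivAt_neg t).div_const a).exp
  have harg : HasDerivAt (fun t => t / a - φ) (1 / a) t :=
    ((hasDerivAt_id t).div_const a).sub_const φ
  refine (hexp.fun_mul (harg.cos.fun_add harg.sin)).congr_deriv ?_
  ring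

theorem deriv_deriv_exp_neg_div_mul_cos (t : ℝ) :
    deriv (deriv fun t => exp (-t / a) * cos (t / a - φ)) t =
      2 * exp (-t / a) * sin (t / a - φ) / a ^ 2 := by
  have hderiv : deriv (fun t => exp (-t / a) * cos (t / a - φ)) =
      fun t => -(exp (-t / a) * (cos (t / a - φ) + sin (t / a - φ))) / a :=
    funext fun t => (hasDerivAt_exp_neg_div_mul_cos a φ t).deriv
  rw [hderiv, ((hasDerivAt_exp_neg_div_mul_cos_add_sin a φ t).fun_neg.div_const a).deriv]
  ring

end DampedOscillation

theorem deriv_deriv_optProfile (t : ℝ) :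
    deriv (deriv optProfile) t = -√2 * exp (-t / √2) * sin (t / √2 - π / 4) := by
  have hprofile : optProfile = fun t => 1 - √2 * (exp (-t / √2) * cos (t / √2 - π / 4)) := by
    funext t
    simp only [optProfile, mul_assoc]
  have hderiv : deriv optProfile =
      fun t => -(√2 * deriv (fun t => exp (-t / √2) * cos (t / √2 - π / 4)) t) := by
    funext t
    rw [hprofile, deriv_const_sub, deriv_const_mul_field']
  rw [hderiv, deriv.fun_neg, deriv_const_mul_field, deriv_deriv_exp_neg_div_mul_cos,
    sq_sqrt zero_le_two]
  ring

theorem optProfile_energy_density (t : ℝ) :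
    (optProfile t - 1) ^ 2 + (deriv (deriv optProfile) t) ^ 2 = 2 * exp (-√2 * t) := by
  have hexp : exp (-t / √2) ^ 2 = exp (-√2 * t) := by
    rw [← exp_nat_mul]
    congr 1
    field_simp
    rw [sq_sqrt zero_le_two]
    push_cast
    ring
  rw [deriv_deriv_optProfile, ← hexp]
  simp only [optProfile]
  linear_combination (2 * exp (-t / √2) ^ 2) * sin_sq_add_cos_sq (t / √2 - π / 4) +
    (exp (-t / √2) ^ 2 * (sin (t / √2 - π / 4) ^ 2 + cos (t / √2 - π / 4) ^ 2)) *
      sq_sqrt (zero_le_two (α := ℝ))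

theorem optProfile_energy :
    (∫ t in Set.Ioi (0 : ℝ),
        ((optProfile t - 1) ^ 2 + (deriv (deriv optProfile) t) ^ 2)) =
      Real.sqrt 2 := by
  simp_rw [optProfile_energy_density]
  rw [integral_const_mul, integral_exp_mul_Ioi (neg_lt_zero.2 (sqrt_pos.2 two_pos))]
  field_simp
  simp
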